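/- arXiv:1012.5551 — 6 statements merged into one kernel-verified Lean document; each statement's English description precedes it below -/
import Mathlib

section
/- Let R be a commutative Noetherian ring and 𝔞 an ideal of R. Then there exist only finitely many prime ideals 𝔭 containing 𝔞 such that depth(R_𝔭) = grade(𝔞). -/
open RingTheory.Sequence IsLocalRing

/-- The depth of an `R`-module `M` over a local ring `R`: the supremum of lengths of
`M`-regular sequences contained in the maximal ideal. -/
noncomputable def localDepth (R : Type*) [CommRing R] [IsLocalRing R]
    (M : Type*) [AddCommGroup M] [Module R M] : ℕ∞ :=
  ⨆ (rs : List R) (_ : RingTheory.Sequence.IsRegular M rs ∧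
      ∀ x ∈ rs, x ∈ IsLocalRing.maximalIdeal R), (rs.length : ℕ∞)

/-- The grade of an ideal: supremum of lengths of `R`-regular sequences contained in it. -/
noncomputable def idealGrade {R : Type*} [CommRing R] (I : Ideal R) : ℕ∞ :=
  ⨆ (rs : List R) (_ : RingTheory.Sequence.IsRegular R rs ∧ ∀ x ∈ rs, x ∈ I),
    (rs.length : ℕ∞)

/-- The depth of the localization `R_𝔭`. -/
noncomputable def primeDepth {R : Type*} [CommRing R] (p : Ideal R) (hp : p.IsPrime) : ℕ∞ :=
  letI := hp
  localDepth (Localization.AtPrime p) (Localization.AtPrime p)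

/-- The depth of the localized module `M_𝔭` over `R_𝔭`. -/
noncomputable def primeDepthMod {R : Type*} [CommRing R] (p : Ideal R) (hp : p.IsPrime)
    (M : Type*) [AddCommGroup M] [Module R M] : ℕ∞ :=
  letI := hp
  localDepth (Localization.AtPrime p) (LocalizedModule p.primeCompl M)

/-- `M` has well-defined rank `r`: `M ⊗ Q(R)` is free of rank `r` over the total
quotient ring `Q(R)`. -/
def HasRank (R : Type*) [CommRing R] (M : Type*) [AddCommGroup M] [Module R M] (r : ℕ) : Prop :=
  Nonempty (LocalizedModule (nonZeroDivisors R) M ≃ₗ[Localization (nonZeroDivisors R)]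
    (Fin r → Localization (nonZeroDivisors R)))

/-- `M` is `m`-torsionless (characterization `(b_m)`):
`depth M_𝔭 ≥ min (m, depth R_𝔭)` for every prime `𝔭`. -/
def IsTorsionlessOfOrder (m : ℕ) (R : Type*) [CommRing R]
    (M : Type*) [AddCommGroup M] [Module R M] : Prop :=
  ∀ (p : Ideal R) (hp : p.IsPrime),
    min (m : ℕ∞) (primeDepth p hp) ≤ primeDepthMod p hp M

/-- `M` has projective dimension at most `n` over `R`. -/
def HasProjDimLE (R : Type u) [CommRing R] :
    ℕ → (M : Type u) → [AddCommGroup M] → [Module R M] → Prop :=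
  Nat.rec (motive := fun _ => (M : Type u) → [AddCommGroup M] → [Module R M] → Prop)
    (fun M _ _ => Module.Projective R M)
    (fun _ ih M _ _ => ∃ (k : ℕ) (f : (Fin k → R) →ₗ[R] M), Function.Surjective f ∧
      ih (LinearMap.ker f))

/-- `M` has projective dimension exactly `n` over `R`. -/
def ProjDimEq (R : Type u) [CommRing R] (n : ℕ)
    (M : Type u) [AddCommGroup M] [Module R M] : Prop :=
  HasProjDimLE R n M ∧ ∀ k, HasProjDimLE R k M → n ≤ k

/-- `M` has finite projective dimension over `R`. -/
def HasFiniteProjDim (R : Type u) [CommRing R]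
    (M : Type u) [AddCommGroup M] [Module R M] : Prop :=
  ∃ n, HasProjDimLE R n M

/-- `M` is torsion-free: the natural map `M → M ⊗ Q(R)` is injective. -/
def IsTorsionFreeMod (R : Type*) [CommRing R] (M : Type*) [AddCommGroup M] [Module R M] : Prop :=
  Function.Injective (LocalizedModule.mkLinearMap (nonZeroDivisors R) M)

/-- The localized module `M_𝔭` is free over `R_𝔭`. -/
def FreeAtPrime {R : Type*} [CommRing R] (p : Ideal R) (hp : p.IsPrime)
    (M : Type*) [AddCommGroup M] [Module R M] : Prop :=
  letI := hp
  Module.Free (Localization.AtPrime p) (LocalizedModule p.primeCompl M)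

/-- The element `x` generates a free rank-one submodule after localizing at `𝔭`,
i.e. the exact sequence `0 → R_𝔭·x → M_𝔭 → (M/Rx)_𝔭 → 0` has first term `≅ R_𝔭`. -/
def ElemLinIndepAt {R : Type*} [CommRing R] (p : Ideal R) (hp : p.IsPrime)
    (M : Type*) [AddCommGroup M] [Module R M] (x : M) : Prop :=
  letI := hp
  Function.Injective (LinearMap.toSpanSingleton (Localization.AtPrime p)
    (LocalizedModule p.primeCompl M) (LocalizedModule.mkLinearMap p.primeCompl M x))

/-- A (Noetherian) local ring is regular iff its maximal ideal is generated by a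
regular sequence. -/
def IsRegularLocalRingP (R : Type*) [CommRing R] [IsLocalRing R] : Prop :=
  ∃ rs : List R, RingTheory.Sequence.IsRegular R rs ∧
    Ideal.span {x | x ∈ rs} = IsLocalRing.maximalIdeal R

/-- The localization `R_𝔭` is a regular local ring. -/
def RegularAtPrime {R : Type*} [CommRing R] (p : Ideal R) (hp : p.IsPrime) : Prop :=
  letI := hp
  IsRegularLocalRingP (Localization.AtPrime p)

/-!
Fix a maximal `R`-regular sequence `x` in `𝔞`. By Rees, `Ext^i(R/𝔞, R)` vanishes below the length
of every regular sequence in `𝔞`, while an induction along `x` shows `Ext^{|x|}(R/𝔞, R) ≠ 0`;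
hence `grade 𝔞 = |x|`. If `𝔭 ⊇ 𝔞` has `depth R_𝔭 = |x|`, the image of `x` is a maximal regular
sequence in `𝔭R_𝔭`, so `𝔭R_𝔭` is an associated prime of `R_𝔭/xR_𝔭` and `𝔭` is one of `R/(x)`,
a finite set.
-/

universe u v

namespace ModuleCat

open CategoryTheory Abelian

variable {R : Type u} [CommRing R] [Small.{v} R] [IsNoetherianRing R]
  (N : ModuleCat.{v} R) [Module.Finite R N] {I : Ideal R}
  (hN : Module.support R N ⊆ PrimeSpectrum.zeroLocus I)
include hN

lemma subsingleton_ext_of_isRegular (M : ModuleCat.{v} R) [Module.Finite R M] {rs : List R}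
    (reg : IsRegular M rs) (mem : ∀ r ∈ rs, r ∈ I) :
    ∀ i < rs.length, Subsingleton (Ext N M i) :=
  subsingleton_ext_of_exists_isRegular (Ideal.ofList rs) N
    (hN.trans (PrimeSpectrum.zeroLocus_anti_mono (Ideal.span_le.mpr mem))) M
    reg.top_ne_smul.symm.lt_top rs (fun _ hr => Ideal.subset_span hr) reg

lemma nontrivial_ext_of_isRegular (M : ModuleCat.{v} R) [Module.Finite R M] {rs : List R}
    (reg : IsRegular M rs) (mem : ∀ r ∈ rs, r ∈ I)
    [Nontrivial (N →ₗ[R] M ⧸ (Ideal.ofList rs • ⊤ : Submodule R M))] :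
    Nontrivial (Ext N M rs.length) := by
  induction rs generalizing M with
  | nil =>
    have e : (M ⧸ (Ideal.ofList ([] : List R) • ⊤ : Submodule R M)) ≃ₗ[R] M :=
      Submodule.quotEquivOfEqBot _ (by simp)
    have : Nontrivial (N →ₗ[R] M) := (LinearEquiv.congrRight e).symm.toEquiv.nontrivial
    exact (Ext.addEquiv₀.trans homAddEquiv).toEquiv.nontrivial
  | cons r rs ih =>
    obtain ⟨hr, hrs⟩ := (isRegular_cons_iff _ r rs).mp reg
    have : Nontrivial (N →ₗ[R] QuotSMulTop r M ⧸ (Ideal.ofList rs • ⊤ : Submodule R _)) :=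
      (LinearEquiv.congrRight
        (Submodule.quotOfListConsSMulTopEquivQuotSMulTopInner M r rs)).symm.toEquiv.nontrivial
    have hquot := ih (ModuleCat.of R (QuotSMulTop r M)) hrs (List.forall_mem_cons.mp mem).2
    have hzero : Subsingleton (Ext N M rs.length) :=
      subsingleton_ext_of_isRegular N hN M reg mem _ (by simp)
    -- `Ext^n(N, M) = 0` makes the connecting map `Ext^n(N, M/rM) → Ext^{n+1}(N, M)` injective
    have hmono := (Ext.covariant_sequence_exact₃' N hr.smulShortComplex_shortExact
      rs.length (rs.length + 1) rfl).mono_g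
        ((AddCommGrpCat.isZero_of_iff_subsingleton.mpr hzero).eq_zero_of_src _)
    exact @Function.Injective.nontrivial _ _ hquot _ ((AddCommGrpCat.mono_iff_injective _).mp hmono)

end ModuleCat

namespace RingTheory.Sequence

section

variable {R : Type*} [CommRing R] {M : Type*} [AddCommGroup M] [Module R M]

lemma IsWeaklyRegular.append_singleton {rs : List R} {r : R} (h : IsWeaklyRegular M rs)
    (hr : IsSMulRegular (M ⧸ (Ideal.ofList rs • ⊤ : Submodule R M)) r) :
    IsWeaklyRegular M (rs ++ [r]) :=
  (isWeaklyRegular_append_iff M rs [r]).mpr ⟨h, (isWeaklyRegular_singleton_iff _ r).mpr hr⟩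

lemma exists_isRegular_forall_not_isSMulRegular [IsNoetherian R M] {I : Ideal R}
    (hI : I • (⊤ : Submodule R M) ≠ ⊤) :
    ∃ rs : List R, IsRegular M rs ∧ (∀ r ∈ rs, r ∈ I) ∧
      ∀ r ∈ I, ¬ IsSMulRegular (M ⧸ (Ideal.ofList rs • ⊤ : Submodule R M)) r := by
  have : Nontrivial M := (Submodule.nontrivial_iff R).mp (nontrivial_of_ne _ _ hI)
  obtain ⟨_, ⟨rs, hrs, hrsI, rfl⟩, hmax⟩ := set_has_maximal_iff_noetherian.mpr ‹_›
    {N | ∃ rs : List R, IsRegular M rs ∧ (∀ r ∈ rs, r ∈ I) ∧ Ideal.ofList rs • ⊤ = N}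
    ⟨_, [], .nil R M, by simp, rfl⟩
  refine ⟨rs, hrs, hrsI, fun r hrI hr => ?_⟩
  have hmemI : ∀ s ∈ rs ++ [r], s ∈ I := by simpa [or_imp, forall_and] using ⟨hrsI, hrI⟩
  refine hmax _ ⟨rs ++ [r], ⟨hrs.1.append_singleton hr, fun h => hI (top_le_iff.mp
    (h.le.trans (Submodule.smul_mono_left (Ideal.span_le.mpr hmemI))))⟩, hmemI, rfl⟩ ?_
  refine lt_of_le_of_ne (Submodule.smul_mono_left
    (Ideal.span_mono fun x hx => List.mem_append_left _ hx)) fun heq => hrs.top_ne_smul ?_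
  have hrM : ∀ m : M, r • m ∈ (Ideal.ofList rs • ⊤ : Submodule R M) := fun m =>
    heq ▸ Submodule.smul_mem_smul (Ideal.subset_span (by simp)) trivial
  refine (Submodule.Quotient.subsingleton_iff.mp (subsingleton_of_forall_eq 0 fun q => ?_)).symm
  obtain ⟨m, rfl⟩ := Submodule.Quotient.mk_surjective _ q
  refine hr (show r • _ = r • 0 from ?_)
  rw [smul_zero, ← Submodule.Quotient.mk_smul, Submodule.Quotient.mk_eq_zero]
  exact hrM m

end

lemma IsRegular.length_le_of_forall_not_isSMulRegular {R : Type u} [CommRing R]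
    [IsNoetherianRing R] {M : Type u} [AddCommGroup M] [Module R M] [Module.Finite R M]
    {I : Ideal R} {rs ss : List R} (hrs : IsRegular M rs) (hrsI : ∀ r ∈ rs, r ∈ I)
    (hmax : ∀ r ∈ I, ¬ IsSMulRegular (M ⧸ (Ideal.ofList rs • ⊤ : Submodule R M)) r)
    (hss : IsRegular M ss) (hssI : ∀ s ∈ ss, s ∈ I) : ss.length ≤ rs.length := by
  let N := ModuleCat.of R (R ⧸ I)
  have hN : Module.support R N ⊆ PrimeSpectrum.zeroLocus I := by
    rw [Module.support_eq_zeroLocus]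
    exact (congrArg _ (congrArg _ Ideal.annihilator_quotient)).subset
  have : Nontrivial (N →ₗ[R] M ⧸ (Ideal.ofList rs • ⊤ : Submodule R M)) := by
    rw [← not_subsingleton_iff_nontrivial, IsSMulRegular.subsingleton_linearMap_iff]
    rintro ⟨r, hr, hreg⟩
    exact hmax r (Ideal.annihilator_quotient (I := I) ▸ hr) hreg
  have := ModuleCat.nontrivial_ext_of_isRegular N hN (.of R M) hrs hrsI
  by_contra! hlt
  exact not_subsingleton _ (ModuleCat.subsingleton_ext_of_isRegular N hN (.of R M) hss hssI _ hlt)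

end RingTheory.Sequence

lemma length_le_idealGrade {R : Type*} [CommRing R] {I : Ideal R} {rs : List R} (h : IsRegular R rs)
    (hI : ∀ r ∈ rs, r ∈ I) : (rs.length : ℕ∞) ≤ idealGrade I :=
  le_iSup₂ (f := fun (rs : List R) (_ : IsRegular R rs ∧ ∀ x ∈ rs, x ∈ I) => (rs.length : ℕ∞))
    rs ⟨h, hI⟩

lemma idealGrade_eq_length {R : Type u} [CommRing R] [IsNoetherianRing R] {I : Ideal R}
    {rs : List R} (hrs : IsRegular R rs) (hrsI : ∀ r ∈ rs, r ∈ I)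
    (hmax : ∀ r ∈ I, ¬ IsSMulRegular (R ⧸ (Ideal.ofList rs • ⊤ : Submodule R R)) r) :
    idealGrade I = rs.length :=
  le_antisymm (iSup₂_le fun _ hss => Nat.cast_le.mpr
      (hrs.length_le_of_forall_not_isSMulRegular hrsI hmax hss.1 hss.2))
    (length_le_idealGrade hrs hrsI)

section LocalDepth

variable {A : Type*} [CommRing A] [IsLocalRing A] {L : Type*} [AddCommGroup L] [Module A L]

lemma length_le_localDepth {rs : List A} (h : IsRegular L rs)
    (hm : ∀ r ∈ rs, r ∈ maximalIdeal A) : (rs.length : ℕ∞) ≤ localDepth A L :=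
  le_iSup₂ (f := fun (rs : List A) (_ : IsRegular L rs ∧ ∀ x ∈ rs, x ∈ maximalIdeal A) =>
    (rs.length : ℕ∞)) rs ⟨h, hm⟩

lemma forall_not_isSMulRegular_of_localDepth_le [Module.Finite A L] [Nontrivial L]
    {rs : List A} (h : IsWeaklyRegular L rs) (hm : ∀ r ∈ rs, r ∈ maximalIdeal A)
    (hd : localDepth A L ≤ rs.length) :
    ∀ r ∈ maximalIdeal A, ¬ IsSMulRegular (L ⧸ (Ideal.ofList rs • ⊤ : Submodule A L)) r := by
  intro r hr hreg
  have hm' : ∀ s ∈ rs ++ [r], s ∈ maximalIdeal A := by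
    simpa [or_imp, forall_and] using ⟨hm, hr⟩
  have := (length_le_localDepth
    (IsRegular.of_isWeaklyRegular_of_mem_maximalIdeal L hm' (h.append_singleton hreg)) hm').trans hd
  norm_cast at this
  simp at this

lemma maximalIdeal_mem_associatedPrimes [IsNoetherianRing A] [Module.Finite A L]
    (h : ∀ r ∈ maximalIdeal A, ¬ IsSMulRegular L r) : maximalIdeal A ∈ associatedPrimes A L :=
  (Ideal.subset_iUnion_iff_mem_of_isMaximal_of_finite (associatedPrimes.finite A L) ⊥ ⊥
    (fun _ hI _ _ => hI.isPrime) bot_ne_top bot_ne_top).mp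
    (by rw [biUnion_associatedPrimes_eq_compl_regular]; exact h)

end LocalDepth

lemma mem_associatedPrimes_of_primeDepth_le {R : Type*} [CommRing R] [IsNoetherianRing R]
    {p : Ideal R} (hp : p.IsPrime) {xs : List R} (hxs : IsWeaklyRegular R xs)
    (hxsp : ∀ x ∈ xs, x ∈ p) (hd : primeDepth p hp ≤ xs.length) :
    p ∈ associatedPrimes R (R ⧸ Ideal.ofList xs) := by
  have := hp
  let A := Localization.AtPrime p
  have hreg : IsRegular A (xs.map (algebraMap R A)) :=
    hxs.isRegular_of_isLocalization_of_mem A p hxsp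
  have hm : ∀ y ∈ xs.map (algebraMap R A), y ∈ maximalIdeal A := by
    simpa only [List.forall_mem_map, IsLocalization.AtPrime.to_map_mem_maximal_iff A p] using hxsp
  have hzd := forall_not_isSMulRegular_of_localDepth_le hreg.1 hm (by rwa [List.length_map])
  have hK : (Ideal.ofList (xs.map (algebraMap R A)) • ⊤ : Submodule A A) =
      (Ideal.ofList xs).localized' A p.primeCompl (Algebra.linearMap R A) := by
    rw [Ideal.localized'_eq_map, Ideal.map_ofList, smul_eq_mul, Ideal.mul_top]
  rw [hK] at hzd
  have hass := maximalIdeal_mem_associatedPrimes hzd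
  rw [← Module.associatedPrimes.preimage_comap_associatedPrimes_eq_associatedPrimes_of_isLocalizedModule
    p.primeCompl A ((Ideal.ofList xs).toLocalizedQuotient' A p.primeCompl
      (Algebra.linearMap R A))] at hass
  rwa [Set.mem_preimage, ← Ideal.under, Localization.AtPrime.under_maximalIdeal] at hass

/-- There are only finitely many primes `𝔭 ⊇ 𝔞` with `depth R_𝔭 = grade 𝔞`. -/
theorem stmt0 {R : Type u} [CommRing R] [IsNoetherianRing R] (a : Ideal R) :
    {p : Ideal R | ∃ hp : p.IsPrime, a ≤ p ∧ primeDepth p hp = idealGrade a}.Finite := by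
  rcases eq_or_ne a ⊤ with rfl | ha
  · exact Set.finite_empty.subset fun p ⟨hp, hle, _⟩ => hp.ne_top (top_le_iff.mp hle)
  obtain ⟨xs, hxs, hxsa, hmax⟩ :=
    exists_isRegular_forall_not_isSMulRegular (M := R) (I := a) (by simpa using ha)
  refine (associatedPrimes.finite R (R ⧸ Ideal.ofList xs)).subset ?_
  rintro p ⟨hp, hap, hd⟩
  exact mem_associatedPrimes_of_primeDepth_le hp hxs.1 (fun x hx => hap (hxsa x hx))
    (hd.trans (idealGrade_eq_length hxs hxsa hmax)).le
end

section
/- Let R be a commutative Noetherian ring, M a finitely generated R-module, and n a natural number. A prime ideal 𝔭 satisfies μ(M_𝔭) > n if and only if 𝔭 contains the ideal I_n(M), where I_n(M) is the sum of the colon ideals (N : M) over all submodules N of M generated by at most n elements. -/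
/-!
Over the local ring `R_𝔭`, an `R`-submodule `N` of the finite module `M` generates `M_𝔭` exactly
when `(M/N)_𝔭 = 0`, i.e. when `𝔭` is outside the support `V(ann (M/N)) = V((N : M))`. Since every
element of `M_𝔭` is a unit multiple of an element of `M`, the module `M_𝔭` is generated by `n`
elements iff some `N` generated by `n` elements satisfies `(N : M) ⊄ 𝔭`.
-/

open RingTheory.Sequence IsLocalRing

open Submodule

theorem Nat.sInf_card_le_iff {α : Type*} {P : Finset α → Prop} (hP : ∃ s, P s) (n : ℕ) :
    sInf {k : ℕ | ∃ s : Finset α, s.card = k ∧ P s} ≤ n ↔ ∃ s : Finset α, s.card ≤ n ∧ P s := by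
  refine ⟨fun h => ?_, fun ⟨s, hsn, hs⟩ => le_trans (Nat.sInf_le ⟨s, rfl, hs⟩) hsn⟩
  obtain ⟨s₀, hs₀⟩ := hP
  obtain ⟨s, hs_card, hs⟩ :=
    Nat.sInf_mem (s := {k : ℕ | ∃ s : Finset α, s.card = k ∧ P s}) ⟨s₀.card, s₀, rfl, hs₀⟩
  exact ⟨s, hs_card ▸ h, hs⟩

theorem LocalizedModule.subsingleton_quotient_iff {R M : Type*} [CommRing R] [AddCommGroup M]
    [Module R M] {S : Submonoid R} (N : Submodule R M) :
    Subsingleton (LocalizedModule S (M ⧸ N)) ↔ ∀ m : M, ∃ r ∈ S, r • m ∈ N := by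
  simp only [subsingleton_iff, N.mkQ_surjective.forall, mkQ_apply, ← Quotient.mk_smul,
    Quotient.mk_eq_zero]

section IsLocalizedModule

variable {R Rₛ M M' : Type*} [CommRing R] [CommRing Rₛ] [Algebra R Rₛ]
  [AddCommGroup M] [Module R M] [AddCommGroup M'] [Module R M'] [Module Rₛ M']
  [IsScalarTower R Rₛ M']

theorem Submodule.localized'_eq_top_iff {S : Submonoid R} [IsLocalization S Rₛ]
    {f : M →ₗ[R] M'} [IsLocalizedModule S f] (N : Submodule R M) :
    N.localized' Rₛ S f = ⊤ ↔ ∀ m : M, ∃ r ∈ S, r • m ∈ N := by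
  refine ⟨fun h m => ?_, fun h => eq_top_iff.mpr fun x _ => ?_⟩
  · obtain ⟨n, hn, s, hns⟩ := (mem_localized' Rₛ S f N (f m)).mp (h ▸ mem_top)
    rw [← IsLocalizedModule.mk'_one S f m, IsLocalizedModule.mk'_eq_mk'_iff] at hns
    obtain ⟨c, hc⟩ := hns
    simp only [one_smul, Submonoid.smul_def] at hc
    refine ⟨c * s, mul_mem c.2 s.2, ?_⟩
    rw [mul_smul]
    exact hc ▸ N.smul_mem _ hn
  · obtain ⟨⟨m, s⟩, rfl⟩ := IsLocalizedModule.mk'_surjective S f x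
    obtain ⟨r, hr, hrm⟩ := h m
    exact ⟨r • m, hrm, ⟨r, hr⟩ * s, IsLocalizedModule.mk'_cancel_left (s₁ := ⟨r, hr⟩) ..⟩

theorem Submodule.localized'_eq_top_iff_not_colon_le [Module.Finite R M] (p : Ideal R)
    [hp : p.IsPrime] [IsLocalization.AtPrime Rₛ p] {f : M →ₗ[R] M'}
    [IsLocalizedModule p.primeCompl f] (N : Submodule R M) :
    N.localized' Rₛ p.primeCompl f = ⊤ ↔ ¬ N.colon Set.univ ≤ p := by
  rw [← N.annihilator_quotient, ← Module.mem_support_iff_of_finite (p := ⟨p, hp⟩),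
    Module.notMem_support_iff, LocalizedModule.subsingleton_quotient_iff, localized'_eq_top_iff]

theorem IsLocalizedModule.exists_finset_card_le_span_eq_top_iff (S : Submonoid R)
    [IsLocalization S Rₛ] (f : M →ₗ[R] M') [IsLocalizedModule S f] (n : ℕ) :
    (∃ s : Finset M', s.card ≤ n ∧ span Rₛ (s : Set M') = ⊤) ↔
      ∃ t : Finset M, t.card ≤ n ∧ span Rₛ (f '' t) = ⊤ := by
  classical
  constructor
  · rintro ⟨s, hsn, hs⟩
    choose g hg using IsLocalizedModule.surj S f
    refine ⟨s.image fun x => (g x).1, Finset.card_image_le.trans hsn, eq_top_iff.mpr ?_⟩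
    rw [← hs, span_le]
    intro x hx
    have hfx : f (g x).1 ∈ span Rₛ (f '' (s.image fun x => (g x).1 : Finset M)) :=
      subset_span ⟨_, Finset.mem_coe.mpr (Finset.mem_image_of_mem _ hx), rfl⟩
    rw [← hg, Submonoid.smul_def, ← algebraMap_smul Rₛ] at hfx
    exact (smul_mem_iff_of_isUnit _ (IsLocalization.map_units Rₛ (g x).2)).mp hfx
  · rintro ⟨t, htn, ht⟩
    exact ⟨t.image f, Finset.card_image_le.trans htn, by rwa [Finset.coe_image]⟩

end IsLocalizedModule

theorem stmt3_general {R : Type u} [CommRing R]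
    (M : Type u) [AddCommGroup M] [Module R M] [Module.Finite R M] (n : ℕ)
    (p : Ideal R) [hp : p.IsPrime] :
    n < sInf {k : ℕ | ∃ s : Finset (LocalizedModule p.primeCompl M), s.card = k ∧
        Submodule.span (Localization.AtPrime p)
          (s : Set (LocalizedModule p.primeCompl M)) = ⊤} ↔
      (⨆ (N : Submodule R M)
          (_ : ∃ s : Finset M, s.card ≤ n ∧ Submodule.span R (s : Set M) = N),
        N.colon ⊤) ≤ p := by
  obtain ⟨s₀, hs₀⟩ :=
    Module.Finite.fg_top (R := Localization.AtPrime p) (M := LocalizedModule p.primeCompl M)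
  rw [← not_le, Nat.sInf_card_le_iff ⟨s₀, hs₀⟩,
    IsLocalizedModule.exists_finset_card_le_span_eq_top_iff p.primeCompl
      (LocalizedModule.mkLinearMap p.primeCompl M)]
  simp only [← localized'_span (Localization.AtPrime p) p.primeCompl,
    localized'_eq_top_iff_not_colon_le, iSup₂_le_iff, Set.top_eq_univ, not_exists, not_and, not_not, forall_exists_index, and_imp]
  exact ⟨fun h N s hs hN => hN ▸ h s hs, fun h s hs => h _ s hs rfl⟩

/-- `μ(M_𝔭) > n` iff `𝔭 ⊇ I_n(M)`, where `I_n(M)` is the sum of the colon ideals `(N : M)`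
over submodules `N` generated by at most `n` elements. -/
theorem stmt3 {R : Type u} [CommRing R] [IsNoetherianRing R]
    (M : Type u) [AddCommGroup M] [Module R M] [Module.Finite R M] (n : ℕ)
    (p : Ideal R) [hp : p.IsPrime] :
    n < sInf {k : ℕ | ∃ s : Finset (LocalizedModule p.primeCompl M), s.card = k ∧
        Submodule.span (Localization.AtPrime p)
          (s : Set (LocalizedModule p.primeCompl M)) = ⊤} ↔
      (⨆ (N : Submodule R M)
          (_ : ∃ s : Finset M, s.card ≤ n ∧ Submodule.span R (s : Set M) = N),
        N.colon ⊤) ≤ p :=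
  stmt3_general M n p (hp := hp)
end

section
/- Let R be a commutative Noetherian ring and f : N → N' a homomorphism of finitely generated R-modules with N torsion-free (i.e., the natural map N → N ⊗ Q(R) is injective). Then f is injective if and only if f ⊗_R R_𝔮 is injective for every associated prime 𝔮 of R. -/
open RingTheory.Sequence IsLocalRing

/-- The localized map `f_𝔮 : N_𝔮 → N'_𝔮` is injective. -/
def MapInjectiveAtPrime {R : Type*} [CommRing R] (q : Ideal R) (hq : q.IsPrime)
    {N N' : Type*} [AddCommGroup N] [Module R N] [AddCommGroup N'] [Module R N']
    (f : N →ₗ[R] N') : Prop :=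
  letI := hq
  Function.Injective (IsLocalizedModule.map q.primeCompl
    (LocalizedModule.mkLinearMap q.primeCompl N)
    (LocalizedModule.mkLinearMap q.primeCompl N') f)

/-! An element `x ≠ 0` of the kernel of `f` has an annihilator consisting of zero divisors,
because `N` is torsion-free. By prime avoidance over the finitely many associated primes of `R`,
this annihilator lies in some `𝔮 ∈ Ass R`; then `x / 1 ≠ 0` in `N_𝔮`, yet `f_𝔮 (x / 1) = 0`. -/

theorem Ideal.exists_mem_associatedPrimes_le_of_disjoint_nonZeroDivisors {R : Type*}
    [CommRing R] [IsNoetherianRing R] {I : Ideal R}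
    (h : Disjoint (I : Set R) (nonZeroDivisors R)) :
    ∃ q ∈ associatedPrimes R R, I ≤ q :=
  (I.subset_union_prime_finite (associatedPrimes.finite R R) (f := id) 0 0
    fun _ hq _ _ ↦ hq.isPrime).1 <|
      biUnion_associatedPrimes_eq_compl_nonZeroDivisors R ▸ h.subset_compl_right

theorem IsTorsionFreeMod.disjoint_torsionOf_nonZeroDivisors {R N : Type*} [CommRing R]
    [AddCommGroup N] [Module R N] (htf : IsTorsionFreeMod R N) {x : N} (hx : x ≠ 0) :
    Disjoint (Ideal.torsionOf R N x : Set R) (nonZeroDivisors R) := by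
  refine Set.disjoint_left.mpr fun a hax ha ↦ hx (htf ?_)
  rw [map_zero, IsLocalizedModule.eq_zero_iff (nonZeroDivisors R)]
  exact ⟨⟨a, ha⟩, (Ideal.mem_torsionOf_iff x a).mp hax⟩

theorem LocalizedModule.mkLinearMap_ne_zero_of_torsionOf_le {R N : Type*} [CommRing R]
    [AddCommGroup N] [Module R N] {p : Ideal R} [p.IsPrime] {x : N}
    (hx : Ideal.torsionOf R N x ≤ p) :
    LocalizedModule.mkLinearMap p.primeCompl N x ≠ 0 := by
  rw [Ne, IsLocalizedModule.eq_zero_iff p.primeCompl]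
  rintro ⟨s, hs⟩
  exact s.2 (hx ((Ideal.mem_torsionOf_iff x s.1).mpr hs))

theorem stmt6_general {R : Type u} [CommRing R] [IsNoetherianRing R]
    {N N' : Type u} [AddCommGroup N] [Module R N] [AddCommGroup N'] [Module R N']
    (f : N →ₗ[R] N') (htf : IsTorsionFreeMod R N) :
    Function.Injective f ↔ ∀ (q : Ideal R) (hq : q.IsPrime),
      q ∈ associatedPrimes R R → MapInjectiveAtPrime q hq f := by
  refine ⟨fun hf q _ _ ↦ IsLocalizedModule.map_injective _ _ _ f hf, fun h ↦ ?_⟩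
  refine (injective_iff_map_eq_zero f).mpr fun x hfx ↦ ?_
  by_contra hx
  obtain ⟨q, hq, hle⟩ := Ideal.exists_mem_associatedPrimes_le_of_disjoint_nonZeroDivisors
    (htf.disjoint_torsionOf_nonZeroDivisors hx)
  have := hq.isPrime
  refine LocalizedModule.mkLinearMap_ne_zero_of_torsionOf_le hle (h q this hq ?_)
  rw [IsLocalizedModule.map_apply, hfx, map_zero, map_zero]

/-- A homomorphism out of a torsion-free module is injective iff it is injective after
localizing at every associated prime of `R`. -/
theorem stmt6 {R : Type u} [CommRing R] [IsNoetherianRing R]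
    {N N' : Type u} [AddCommGroup N] [Module R N] [AddCommGroup N'] [Module R N']
    [Module.Finite R N] [Module.Finite R N']
    (f : N →ₗ[R] N') (htf : IsTorsionFreeMod R N) :
    Function.Injective f ↔ ∀ (q : Ideal R) (hq : q.IsPrime),
      q ∈ associatedPrimes R R → MapInjectiveAtPrime q hq f :=
  stmt6_general f htf
end

section
/- Let R be a commutative Noetherian local ring and 𝔞 a proper ideal of R with grade(𝔞) ≥ 2. Then 𝔞 is not a reflexive R-module (equivalently, the natural map 𝔞 → 𝔞** is not an isomorphism) unless 𝔞 = R. -/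
open RingTheory.Sequence IsLocalRing

/-! If `x, y ∈ 𝔞` form a regular sequence, then every `f : 𝔞 →ₗ[R] R` satisfies
`y * f x = x * f y`, so `x ∣ f x`. Hence `f ↦ f x / x` is a well-defined element of `𝔞**`,
taking the value `1` at the inclusion `𝔞 ↪ R`; if it were `eval m` for some `m ∈ 𝔞`,
then `m = 1`. -/

theorem exists_isRegular_cons_cons_of_two_le_idealGrade {R : Type*} [CommRing R] {I : Ideal R}
    (h : 2 ≤ idealGrade I) :
    ∃ x y rs, IsRegular R (x :: y :: rs) ∧ x ∈ I ∧ y ∈ I := by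
  rw [show (2 : ℕ∞) = 1 + 1 from rfl, ENat.add_one_le_iff ENat.one_ne_top] at h
  obtain ⟨rs, ⟨hreg, hmem⟩, hlen⟩ := lt_iSup_iff.mp h |>.imp fun _ => lt_iSup_iff.mp
  match rs, hlen with
  | x :: y :: rs, _ => exact ⟨x, y, rs, hreg, hmem x (by simp), hmem y (by simp)⟩

open Pointwise in
theorem dvd_of_dvd_mul_of_isSMulRegular_quotSMulTop {R : Type*} [CommRing R] {x y r : R}
    (hy : IsSMulRegular (QuotSMulTop x R) y) (h : x ∣ y * r) : x ∣ r := by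
  have hspan : (x • ⊤ : Submodule R R) = Ideal.span {x} := by
    rw [← Submodule.ideal_span_singleton_smul, smul_eq_mul, Ideal.mul_top]
  have hr : (Submodule.Quotient.mk r : QuotSMulTop x R) = 0 := hy <| by
    change y • _ = y • _
    rw [smul_zero, ← Submodule.Quotient.mk_smul, smul_eq_mul, Submodule.Quotient.mk_eq_zero,
      hspan, Ideal.mem_span_singleton]
    exact h
  rwa [Submodule.Quotient.mk_eq_zero, hspan, Ideal.mem_span_singleton] at hr

theorem Ideal.smul_map_eq_smul_map {R M : Type*} [CommRing R] [AddCommGroup M] [Module R M]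
    {I : Ideal R} (f : I →ₗ[R] M) (u v : I) : (v : R) • f u = (u : R) • f v := by
  rw [← map_smul, ← map_smul]
  congr 1
  ext
  exact mul_comm _ _

theorem exists_linearMap_mul_eq_of_forall_dvd {R M : Type*} [CommRing R] [AddCommGroup M]
    [Module R M] {x : R} (hx : IsSMulRegular R x) (g : M →ₗ[R] R) (hg : ∀ m, x ∣ g m) :
    ∃ h : M →ₗ[R] R, ∀ m, x * h m = g m := by
  have hinj : Function.Injective (LinearMap.toSpanSingleton R R x) := fun r s hrs =>
    hx <| by simpa [mul_comm x] using hrs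
  let e := LinearEquiv.ofInjective _ hinj
  let g' := g.codRestrict (LinearMap.toSpanSingleton R R x).range fun m =>
    (hg m).imp fun c hc => by simp [hc, mul_comm]
  refine ⟨e.symm.toLinearMap ∘ₗ g', fun m => ?_⟩
  have := e.apply_symm_apply (g' m)
  rw [Subtype.ext_iff, LinearEquiv.ofInjective_apply] at this
  exact (mul_comm _ _).trans this

theorem Ideal.exists_dual_dual_apply_subtype_eq_one {R : Type*} [CommRing R] {I : Ideal R}
    {x y : R} (hx : IsSMulRegular R x) (hy : IsSMulRegular (QuotSMulTop x R) y)
    (hxI : x ∈ I) (hyI : y ∈ I) :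
    ∃ θ : Module.Dual R (Module.Dual R I), θ I.subtype = 1 := by
  have hdvd (f : Module.Dual R I) : x ∣ Module.Dual.eval R I ⟨x, hxI⟩ f :=
    dvd_of_dvd_mul_of_isSMulRegular_quotSMulTop hy
      ⟨f ⟨y, hyI⟩, by simpa using Ideal.smul_map_eq_smul_map f ⟨x, hxI⟩ ⟨y, hyI⟩⟩
  obtain ⟨θ, hθ⟩ := exists_linearMap_mul_eq_of_forall_dvd hx _ hdvd
  exact ⟨θ, hx <| by simpa using hθ I.subtype⟩

theorem Ideal.eq_top_of_dual_eval_eq {R : Type*} [CommRing R] {I : Ideal R} {m : I}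
    {θ : Module.Dual R (Module.Dual R I)} (hm : Module.Dual.eval R I m = θ)
    (hθ : θ I.subtype = 1) : I = ⊤ := by
  have hm_one : (m : R) = 1 := by rw [← hθ, ← hm]; rfl
  exact (Ideal.eq_top_iff_one I).mpr (hm_one ▸ m.2)

theorem stmt9_general {R : Type u} [CommRing R]
    (a : Ideal R) (ha : a ≠ ⊤) (hg : 2 ≤ idealGrade a) :
    ¬ Function.Bijective (Module.Dual.eval R a) := by
  intro hbij
  obtain ⟨x, y, rs, hreg, hxa, hya⟩ := exists_isRegular_cons_cons_of_two_le_idealGrade hg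
  rw [isRegular_cons_iff, isRegular_cons_iff] at hreg
  obtain ⟨θ, hθ⟩ := a.exists_dual_dual_apply_subtype_eq_one hreg.1 hreg.2.1 hxa hya
  obtain ⟨m, hm⟩ := hbij.2 θ
  exact ha (Ideal.eq_top_of_dual_eval_eq hm hθ)

/-- A proper ideal of grade `≥ 2` in a Noetherian local ring is not reflexive. -/
theorem stmt9 {R : Type u} [CommRing R] [IsNoetherianRing R] [IsLocalRing R]
    (a : Ideal R) (ha : a ≠ ⊤) (hg : 2 ≤ idealGrade a) :
    ¬ Function.Bijective (Module.Dual.eval R a) :=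
  stmt9_general a ha hg
end

section
/- Let R be a commutative Noetherian ring, x₁,…,xₙ an R-regular sequence, n ≥ 2, and M = Rⁿ/R·(x₁,…,xₙ). Then M is torsion-free of rank n−1, i.e., M is a 1-torsionless R-module. -/
open RingTheory.Sequence IsLocalRing

/-!
Since `x₁` is a nonzerodivisor, a relation `s • m = r • x` with `s` a nonzerodivisor forces all
`2 × 2` minors `mᵢ xⱼ - mⱼ xᵢ` to vanish; then `x₂ m₁ ∈ (x₁)`, so `m₁ = t x₁` because `x₂` is
regular modulo `x₁`, and cancelling `x₁` gives `m = t x`. Thus `R ∙ x` is saturated in `Rⁿ` and the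
quotient is torsion-free. Over `Q(R)` the coordinate `x₁` becomes a unit, so projecting along `x`
identifies `Q(R)ⁿ / Q(R) x` with `Q(R)ⁿ⁻¹`, and localization commutes with the quotient.
-/

open nonZeroDivisors Pointwise

theorem IsSMulRegular.mem_span_singleton_of_mul_mem {R : Type*} [CommRing R] {a b : R}
    (hb : IsSMulRegular (QuotSMulTop a R) b) {t : R} (ht : b * t ∈ Ideal.span {a}) :
    t ∈ Ideal.span {a} := by
  have hspan : a • (⊤ : Submodule R R) = Ideal.span {a} := by
    simp [← Submodule.ideal_span_singleton_smul]
  rw [← hspan, ← Submodule.Quotient.mk_eq_zero] at ht ⊢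
  exact hb.right_eq_zero_of_smul ht

theorem mem_span_singleton_of_smul_mem {R ι : Type*} [CommRing R] {v : ι → R} {i j : ι}
    (hi : IsSMulRegular R (v i)) (hj : IsSMulRegular (QuotSMulTop (v i) R) (v j))
    {s : R} (hs : s ∈ R⁰) {m : ι → R} (hsm : s • m ∈ Submodule.span R {v}) :
    m ∈ Submodule.span R {v} := by
  obtain ⟨r, hr⟩ := Submodule.mem_span_singleton.1 hsm
  have hr' (k : ι) : r * v k = s * m k := congrFun hr k
  have cross (k l : ι) : m k * v l = m l * v k := by
    refine sub_eq_zero.1 ((mem_nonZeroDivisors_iff.1 hs).1 _ ?_)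
    linear_combination v k * hr' l - v l * hr' k
  obtain ⟨t, ht⟩ := Ideal.mem_span_singleton'.1 <|
    hj.mem_span_singleton_of_mul_mem (t := m i) <|
      Ideal.mem_span_singleton'.2 ⟨m j, by linear_combination cross j i⟩
  refine Submodule.mem_span_singleton.2 ⟨t, funext fun k => ?_⟩
  refine (sub_eq_zero.1 (hi.right_eq_zero_of_smul ?_)).symm
  simp only [Pi.smul_apply, smul_eq_mul]
  linear_combination cross k i - v k * ht

theorem isTorsionFreeMod_quotient {R M : Type*} [CommRing R] [AddCommGroup M] [Module R M]
    {N : Submodule R M} (hN : ∀ s ∈ R⁰, ∀ m : M, s • m ∈ N → m ∈ N) :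
    IsTorsionFreeMod R (M ⧸ N) := by
  refine (IsLocalizedModule.injective_iff_isRegular R⁰ _).2 fun s => ?_
  rw [isSMulRegular_iff_right_eq_zero_of_smul]
  intro z hz
  obtain ⟨m, rfl⟩ := Submodule.Quotient.mk_surjective N z
  rw [Submonoid.smul_def, ← Submodule.Quotient.mk_smul, Submodule.Quotient.mk_eq_zero] at hz
  exact (Submodule.Quotient.mk_eq_zero N).2 (hN s s.2 m hz)

section
variable {A : Type*} [CommRing A] {k : ℕ} (v : Fin (k + 1) → A) (hv : IsUnit (v 0))

/-- The projection onto the last `k` coordinates along the line `A ∙ v`. -/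
noncomputable def projAlongOfIsUnit : (Fin (k + 1) → A) →ₗ[A] (Fin k → A) :=
  LinearMap.funLeft A A Fin.succ -
    (((hv.unit⁻¹ : Aˣ) : A) • LinearMap.proj 0).smulRight (Fin.tail v)

theorem projAlongOfIsUnit_apply (m : Fin (k + 1) → A) :
    projAlongOfIsUnit v hv m = Fin.tail m - (((hv.unit⁻¹ : Aˣ) : A) * m 0) • Fin.tail v := rfl

theorem ker_projAlongOfIsUnit :
    LinearMap.ker (projAlongOfIsUnit v hv) = Submodule.span A {v} := by
  ext m
  rw [LinearMap.mem_ker, projAlongOfIsUnit_apply, sub_eq_zero, Submodule.mem_span_singleton]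
  constructor
  · intro h
    refine ⟨((hv.unit⁻¹ : Aˣ) : A) * m 0, funext fun i => Fin.cases ?_ (fun i => ?_) i⟩
    · simp [mul_right_comm]
    · exact (congrFun h i).symm
  · rintro ⟨r, rfl⟩
    ext i
    simp [Fin.tail, mul_left_comm _ r]

theorem projAlongOfIsUnit_surjective : Function.Surjective (projAlongOfIsUnit v hv) :=
  fun w => ⟨Fin.cons 0 w, by simp [projAlongOfIsUnit_apply]⟩

noncomputable def quotSpanSingletonEquivOfIsUnit :
    ((Fin (k + 1) → A) ⧸ Submodule.span A {v}) ≃ₗ[A] (Fin k → A) :=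
  (Submodule.quotEquivOfEq _ _ (ker_projAlongOfIsUnit v hv).symm).trans
    ((projAlongOfIsUnit v hv).quotKerEquivOfSurjective (projAlongOfIsUnit_surjective v hv))
end

theorem hasRank_quotient_span_singleton {R : Type*} [CommRing R] {k : ℕ} (v : Fin (k + 1) → R)
    (hv : v 0 ∈ R⁰) : HasRank R ((Fin (k + 1) → R) ⧸ Submodule.span R {v}) k := by
  let Q := Localization R⁰
  let f : (Fin (k + 1) → R) →ₗ[R] (Fin (k + 1) → Q) :=
    .pi fun i => Algebra.linearMap R Q ∘ₗ .proj i
  have hspan : (Submodule.span R {v}).localized' Q R⁰ f = Submodule.span Q {f v} := by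
    rw [Submodule.localized'_eq_span, ← Submodule.map_coe, Submodule.map_span,
      Set.image_singleton, Submodule.span_span_of_tower]
  have hunit : IsUnit (f v 0) := IsLocalization.map_units Q ⟨v 0, hv⟩
  exact ⟨((IsLocalizedModule.iso R⁰ ((Submodule.span R {v}).toLocalizedQuotient' Q R⁰ f)
    ).extendScalarsOfIsLocalization R⁰ Q).trans <|
      (Submodule.quotEquivOfEq _ _ hspan).trans (quotSpanSingletonEquivOfIsUnit (f v) hunit)⟩

theorem stmt13_general {R : Type u} [CommRing R]
    (xs : List R) (hreg : RingTheory.Sequence.IsRegular R xs) (hn : 2 ≤ xs.length) :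
    IsTorsionFreeMod R ((Fin xs.length → R) ⧸
      LinearMap.range (LinearMap.toSpanSingleton R (Fin xs.length → R)
        (fun i => xs.get i))) ∧
    HasRank R ((Fin xs.length → R) ⧸
      LinearMap.range (LinearMap.toSpanSingleton R (Fin xs.length → R)
        (fun i => xs.get i))) (xs.length - 1) := by
  obtain ⟨a, b, l, rfl⟩ : ∃ a b l, xs = a :: b :: l := by
    match xs, hn with
    | a :: b :: l, _ => exact ⟨a, b, l, rfl⟩
  obtain ⟨ha, hb, -⟩ : IsSMulRegular R a ∧ IsSMulRegular (QuotSMulTop a R) b ∧ _ := by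
    simpa only [isRegular_cons_iff] using hreg
  rw [← LinearMap.span_singleton_eq_range]
  let v : Fin (a :: b :: l).length → R := fun i => (a :: b :: l).get i
  exact ⟨isTorsionFreeMod_quotient fun s hs m hm =>
      mem_span_singleton_of_smul_mem (v := v) (i := ⟨0, by simp⟩) (j := ⟨1, by simp⟩)
        ha hb hs hm,
    hasRank_quotient_span_singleton v <|
      isRegular_iff_mem_nonZeroDivisors.1 (isLeftRegular_iff_isRegular.1 ha.isLeftRegular)⟩

/-- For a regular sequence `x₁,…,xₙ` with `n ≥ 2`, the module `M = Rⁿ/R·(x₁,…,xₙ)` is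
torsion-free of rank `n − 1`. -/
theorem stmt13 {R : Type u} [CommRing R] [IsNoetherianRing R]
    (xs : List R) (hreg : RingTheory.Sequence.IsRegular R xs) (hn : 2 ≤ xs.length) :
    IsTorsionFreeMod R ((Fin xs.length → R) ⧸
      LinearMap.range (LinearMap.toSpanSingleton R (Fin xs.length → R)
        (fun i => xs.get i))) ∧
    HasRank R ((Fin xs.length → R) ⧸
      LinearMap.range (LinearMap.toSpanSingleton R (Fin xs.length → R)
        (fun i => xs.get i))) (xs.length - 1) :=
  stmt13_general xs hreg hn
end

section
/- Let R be a commutative Noetherian ring, g : Rⁿ → M a surjection of finitely generated R-modules, x ∈ Rⁿ, M'' = M/Rg(x), and p' : Rⁿ → Rⁿ/Rx the canonical projection with induced surjection g'' : Rⁿ/Rx → M''. If g(x) is a linearly independent element of M (i.e., ann(g(x)) consists only of zero after tensoring with Q(R), so Rg(x) has rank 1) and ker(g) is torsion-free, then p' restricts to an isomorphism from ker(g) onto ker(g''). -/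
open RingTheory.Sequence IsLocalRing

/-! If `r • x ∈ ker g` then `r • g x = 0`, which forces `r = 0` because `g x` stays linearly
independent over `Q(R)` and `R` embeds in `Q(R)`; so `ker g` meets `R x` trivially. Surjectivity
onto `ker g''` holds for any `g`: the preimage of `R g(x)` under `g` is `ker g + R x`. -/

section

open Submodule LinearMap

variable {R : Type*} [CommRing R] {M N : Type*} [AddCommGroup M] [Module R M]
  [AddCommGroup N] [Module R N]

theorem injective_toSpanSingleton_of_localization {S : Submonoid R} (hS : S ≤ nonZeroDivisors R)
    {m : M} (h : Function.Injective (toSpanSingleton (Localization S) (LocalizedModule S M)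
      (LocalizedModule.mkLinearMap S M m))) :
    Function.Injective (toSpanSingleton R M m) := by
  refine (injective_iff_map_eq_zero _).mpr fun r hr => ?_
  have hloc : algebraMap R (Localization S) r = 0 := h <| by
    rw [toSpanSingleton_apply, algebraMap_smul, ← map_smul, ← toSpanSingleton_apply, hr,
      map_zero, map_zero]
  exact IsLocalization.injective (Localization S) hS (hloc.trans (map_zero _).symm)

theorem disjoint_ker_span_singleton (f : N →ₗ[R] M) (x : N)
    (h : Function.Injective (toSpanSingleton R M (f x))) :
    Disjoint (ker f) (span R {x}) := by
  refine disjoint_def.mpr fun y hy hyx => ?_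
  obtain ⟨r, rfl⟩ := mem_span_singleton.mp hyx
  have hr : r = 0 := h <| by rw [toSpanSingleton_apply, ← map_smul, mem_ker.mp hy, map_zero]
  rw [hr, zero_smul]

theorem map_mkQ_ker_eq_ker (f : N →ₗ[R] M) (x : N)
    (f'' : (N ⧸ span R {x}) →ₗ[R] (M ⧸ span R {f x}))
    (h : f''.comp (span R {x}).mkQ = (span R {f x}).mkQ.comp f) :
    (ker f).map (span R {x}).mkQ = ker f'' := by
  have hsup : ker f ⊔ span R {x} = comap (span R {x}).mkQ (ker f'') := by
    rw [← ker_comp, h, ker_comp, ker_mkQ, ← Set.image_singleton, ← Submodule.map_span,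
      comap_map_eq, sup_comm]
  rw [← map_comap_eq_of_surjective (span R {x}).mkQ_surjective (ker f''), ← hsup,
    Submodule.map_sup, mkQ_map_self, sup_bot_eq]

end

theorem stmt15_general {R : Type u} [CommRing R]
    {M : Type u} [AddCommGroup M] [Module R M] (n : ℕ)
    (g : (Fin n → R) →ₗ[R] M) (x : Fin n → R)
    (hli : Function.Injective (LinearMap.toSpanSingleton
      (Localization (nonZeroDivisors R)) (LocalizedModule (nonZeroDivisors R) M)
      (LocalizedModule.mkLinearMap (nonZeroDivisors R) M (g x))))
    (g'' : ((Fin n → R) ⧸ Submodule.span R {x}) →ₗ[R] (M ⧸ Submodule.span R {g x}))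
    (hcomm : g''.comp (Submodule.mkQ (Submodule.span R {x})) =
      (Submodule.mkQ (Submodule.span R {g x})).comp g) :
    Set.InjOn (Submodule.mkQ (Submodule.span R {x})) (LinearMap.ker g) ∧
      Submodule.mkQ (Submodule.span R {x}) '' (LinearMap.ker g) =
        (LinearMap.ker g'' : Set ((Fin n → R) ⧸ Submodule.span R {x})) := by
  refine ⟨LinearMap.injOn_of_disjoint_ker le_rfl ?_, ?_⟩
  · rw [Submodule.ker_mkQ]
    exact disjoint_ker_span_singleton g x (injective_toSpanSingleton_of_localization le_rfl hli)
  · rw [← Submodule.map_coe, map_mkQ_ker_eq_ker g x g'' hcomm]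

/-- Step (4') in the proof of Theorem 2: the projection `Rⁿ → Rⁿ/Rx` restricts to an
isomorphism from `ker g` onto `ker g''`. -/
theorem stmt15 {R : Type u} [CommRing R] [IsNoetherianRing R]
    {M : Type u} [AddCommGroup M] [Module R M] [Module.Finite R M] (n : ℕ)
    (g : (Fin n → R) →ₗ[R] M) (hg : Function.Surjective g) (x : Fin n → R)
    (hli : Function.Injective (LinearMap.toSpanSingleton
      (Localization (nonZeroDivisors R)) (LocalizedModule (nonZeroDivisors R) M)
      (LocalizedModule.mkLinearMap (nonZeroDivisors R) M (g x))))
    (htf : IsTorsionFreeMod R (LinearMap.ker g))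
    (g'' : ((Fin n → R) ⧸ Submodule.span R {x}) →ₗ[R] (M ⧸ Submodule.span R {g x}))
    (hcomm : g''.comp (Submodule.mkQ (Submodule.span R {x})) =
      (Submodule.mkQ (Submodule.span R {g x})).comp g) :
    Set.InjOn (Submodule.mkQ (Submodule.span R {x})) (LinearMap.ker g) ∧
      Submodule.mkQ (Submodule.span R {x}) '' (LinearMap.ker g) =
        (LinearMap.ker g'' : Set ((Fin n → R) ⧸ Submodule.span R {x})) :=
  stmt15_general n g x hli g'' hcomm
end
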